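/- For an n×n complex matrix A, the distance to instability defined as the infimum of ‖Δ‖₂ over all perturbations Δ such that A+Δ has an eigenvalue in the closed right half-plane equals the infimum over z in the closed right half-plane of the smallest singular value of A − zI. -/

import Mathlib

open Matrix

/-- Euclidean (ℓ²) norm of a finite complex vector. -/
noncomputable def enormL2 {ι : Type*} [Fintype ι] (v : ι → ℂ) : ℝ :=
  ‖(EuclideanSpace.equiv ι ℂ).symm v‖

/-- Smallest singular value of a (possibly rectangular) complex matrix,
characterized as the infimum of ‖Mw‖₂ over unit vectors w. -/
noncomputable def sigmaMin {m l : Type*} [Fintype m] [Fintype l] (M : Matrix m l ℂ) : ℝ :=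
  sInf {r : ℝ | ∃ w : l → ℂ, enormL2 w = 1 ∧ r = enormL2 (M.mulVec w)}

/-- Spectral norm of a complex matrix: supremum of ‖Mw‖₂ over unit vectors w. -/
noncomputable def specNorm {m l : Type*} [Fintype m] [Fintype l] (M : Matrix m l ℂ) : ℝ :=
  sSup {r : ℝ | ∃ w : l → ℂ, enormL2 w = 1 ∧ r = enormL2 (M.mulVec w)}

/-- Distance to instability: inf over the closed right half-plane of σ_min(A − zI). -/
noncomputable def distInstab {n : ℕ} (A : Matrix (Fin n) (Fin n) ℂ) : ℝ :=
  sInf {r : ℝ | ∃ z : ℂ, 0 ≤ z.re ∧ r = sigmaMin (A - z • 1)}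

/-!
If `A + Δ - zI` is singular, a unit vector `w` in its kernel gives
`σ_min(A - zI) ≤ ‖(A - zI) w‖ = ‖Δ w‖ ≤ ‖Δ‖₂`. Conversely, if the unit vector `w` attains
`σ_min(A - zI)`, the rank-one perturbation `Δ = -((A - zI) w) w*` annihilates `w`, and by
Cauchy–Schwarz `‖Δ‖₂ ≤ ‖(A - zI) w‖ = σ_min(A - zI)`.
-/

section EuclideanNorm

variable {ι : Type*} [Fintype ι]

lemma enormL2_nonneg (v : ι → ℂ) : 0 ≤ enormL2 v := norm_nonneg _

lemma enormL2_smul (c : ℂ) (v : ι → ℂ) : enormL2 (c • v) = ‖c‖ * enormL2 v := by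
  simp only [enormL2, map_smul, norm_smul]

lemma enormL2_neg (v : ι → ℂ) : enormL2 (-v) = enormL2 v := by
  simp only [enormL2, map_neg, norm_neg]

lemma enormL2_eq_zero {v : ι → ℂ} : enormL2 v = 0 ↔ v = 0 := by
  simp [enormL2]

lemma ne_zero_of_enormL2_eq_one {v : ι → ℂ} (hv : enormL2 v = 1) : v ≠ 0 := by
  rintro rfl
  exact zero_ne_one ((enormL2_eq_zero.mpr rfl).symm.trans hv)

lemma continuous_enormL2 : Continuous (enormL2 : (ι → ℂ) → ℝ) :=
  (EuclideanSpace.equiv ι ℂ).symm.continuous.norm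

lemma isCompact_setOf_enormL2_eq_one : IsCompact {w : ι → ℂ | enormL2 w = 1} := by
  have := (EuclideanSpace.equiv ι ℂ).symm.toHomeomorph.isCompact_preimage.mpr
    (isCompact_sphere (0 : EuclideanSpace ℂ ι) 1)
  convert this using 1
  ext w
  simp [enormL2]

lemma exists_enormL2_eq_one [Nonempty ι] : ∃ w : ι → ℂ, enormL2 w = 1 := by
  obtain ⟨x, hx⟩ :=
    (NormedSpace.sphere_nonempty (x := (0 : EuclideanSpace ℂ ι)) (r := 1)).mpr zero_le_one
  exact ⟨EuclideanSpace.equiv ι ℂ x, by simpa [enormL2] using hx⟩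

lemma enormL2_inv_smul_self {v : ι → ℂ} (hv : v ≠ 0) :
    enormL2 ((((enormL2 v)⁻¹ : ℝ) : ℂ) • v) = 1 := by
  have hpos : 0 < enormL2 v := (enormL2_nonneg v).lt_of_ne' (enormL2_eq_zero.not.mpr hv)
  rw [enormL2_smul, Complex.norm_real, Real.norm_of_nonneg (inv_nonneg.mpr hpos.le),
    inv_mul_cancel₀ hpos.ne']

lemma star_dotProduct_eq_inner (w x : ι → ℂ) :
    star w ⬝ᵥ x =
      inner ℂ ((EuclideanSpace.equiv ι ℂ).symm w) ((EuclideanSpace.equiv ι ℂ).symm x) := by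
  simp [EuclideanSpace.inner_eq_star_dotProduct, dotProduct_comm]

lemma norm_star_dotProduct_le (w x : ι → ℂ) : ‖star w ⬝ᵥ x‖ ≤ enormL2 w * enormL2 x := by
  rw [star_dotProduct_eq_inner]; exact norm_inner_le_norm _ _

lemma star_dotProduct_self (w : ι → ℂ) : star w ⬝ᵥ w = (enormL2 w ^ 2 : ℝ) := by
  rw [star_dotProduct_eq_inner, inner_self_eq_norm_sq_to_K]; simp [enormL2]

end EuclideanNorm

section SingularValues

variable {m l : Type*} [Fintype m] [Fintype l]

def unitSphereNorms (M : Matrix m l ℂ) : Set ℝ :=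
  {r : ℝ | ∃ w : l → ℂ, enormL2 w = 1 ∧ r = enormL2 (M *ᵥ w)}

lemma isCompact_unitSphereNorms (M : Matrix m l ℂ) : IsCompact (unitSphereNorms M) := by
  have hf : Continuous fun w : l → ℂ => enormL2 (M *ᵥ w) :=
    continuous_enormL2.comp (continuous_const.matrix_mulVec continuous_id)
  convert isCompact_setOf_enormL2_eq_one.image hf using 1
  ext r
  simp [unitSphereNorms, eq_comm]

lemma sigmaMin_le_enormL2_mulVec (M : Matrix m l ℂ) {w : l → ℂ} (hw : enormL2 w = 1) :
    sigmaMin M ≤ enormL2 (M *ᵥ w) :=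
  csInf_le ⟨0, by rintro _ ⟨x, -, rfl⟩; exact enormL2_nonneg _⟩ ⟨w, hw, rfl⟩

lemma enormL2_mulVec_le_specNorm (M : Matrix m l ℂ) {w : l → ℂ} (hw : enormL2 w = 1) :
    enormL2 (M *ᵥ w) ≤ specNorm M :=
  le_csSup (isCompact_unitSphereNorms M).bddAbove ⟨w, hw, rfl⟩

lemma specNorm_nonneg (M : Matrix m l ℂ) : 0 ≤ specNorm M :=
  Real.sSup_nonneg <| by rintro _ ⟨w, -, rfl⟩; exact enormL2_nonneg _

lemma sigmaMin_nonneg (M : Matrix m l ℂ) : 0 ≤ sigmaMin M :=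
  Real.sInf_nonneg <| by rintro _ ⟨w, -, rfl⟩; exact enormL2_nonneg _

lemma sigmaMin_of_isEmpty [IsEmpty l] (M : Matrix m l ℂ) : sigmaMin M = 0 := by
  have : unitSphereNorms M = ∅ := Set.eq_empty_of_forall_notMem fun _ ⟨w, hw, _⟩ =>
    ne_zero_of_enormL2_eq_one hw (Subsingleton.elim w 0)
  exact (congrArg sInf this).trans Real.sInf_empty

lemma exists_enormL2_mulVec_eq_sigmaMin [Nonempty l] (M : Matrix m l ℂ) :
    ∃ w : l → ℂ, enormL2 w = 1 ∧ enormL2 (M *ᵥ w) = sigmaMin M := by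
  obtain ⟨w, hw⟩ := exists_enormL2_eq_one (ι := l)
  obtain ⟨w, hw, h⟩ := (isCompact_unitSphereNorms M).sInf_mem ⟨_, w, hw, rfl⟩
  exact ⟨w, hw, h.symm⟩

lemma specNorm_vecMulVec_star_le (u : m → ℂ) {w : l → ℂ} (hw : enormL2 w = 1) :
    specNorm (vecMulVec u (star w)) ≤ enormL2 u := by
  refine Real.sSup_le ?_ (enormL2_nonneg u)
  rintro _ ⟨x, hx, rfl⟩
  rw [vecMulVec_mulVec, op_smul_eq_smul, enormL2_smul]
  calc ‖star w ⬝ᵥ x‖ * enormL2 u ≤ (enormL2 w * enormL2 x) * enormL2 u :=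
        mul_le_mul_of_nonneg_right (norm_star_dotProduct_le w x) (enormL2_nonneg u)
    _ = enormL2 u := by rw [hw, hx, one_mul, one_mul]

end SingularValues

section Perturbation

variable {ι : Type*} [Fintype ι] [DecidableEq ι]

lemma sigmaMin_le_specNorm_of_det_add_eq_zero {M Δ : Matrix ι ι ℂ} (h : (M + Δ).det = 0) :
    sigmaMin M ≤ specNorm Δ := by
  obtain ⟨v, hv, hMv⟩ := exists_mulVec_eq_zero_iff.mpr h
  set w := (((enormL2 v)⁻¹ : ℝ) : ℂ) • v
  have hMw : M *ᵥ w = -(Δ *ᵥ w) := by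
    rw [eq_neg_iff_add_eq_zero, ← add_mulVec, mulVec_smul, hMv, smul_zero]
  calc sigmaMin M ≤ enormL2 (M *ᵥ w) := sigmaMin_le_enormL2_mulVec M (enormL2_inv_smul_self hv)
    _ = enormL2 (Δ *ᵥ w) := by rw [hMw, enormL2_neg]
    _ ≤ specNorm Δ := enormL2_mulVec_le_specNorm Δ (enormL2_inv_smul_self hv)

lemma exists_det_add_eq_zero_specNorm_le [Nonempty ι] (M : Matrix ι ι ℂ) :
    ∃ Δ : Matrix ι ι ℂ, (M + Δ).det = 0 ∧ specNorm Δ ≤ sigmaMin M := by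
  obtain ⟨w, hw, hMw⟩ := exists_enormL2_mulVec_eq_sigmaMin M
  have hww : star w ⬝ᵥ w = 1 := by rw [star_dotProduct_self, hw]; norm_num
  refine ⟨vecMulVec (-(M *ᵥ w)) (star w), ?_, ?_⟩
  · refine exists_mulVec_eq_zero_iff.mp ⟨w, ne_zero_of_enormL2_eq_one hw, ?_⟩
    rw [add_mulVec, vecMulVec_mulVec, op_smul_eq_smul, hww, one_smul, add_neg_cancel]
  · simpa [enormL2_neg, hMw] using specNorm_vecMulVec_star_le (-(M *ᵥ w)) hw

end Perturbation

/-- the perturbation-based distance to instability equals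
inf over the closed right half-plane of the smallest singular value of A − zI. -/
theorem distInstab_eq_inf_sigmaMin (n : ℕ) (A : Matrix (Fin n) (Fin n) ℂ) :
    sInf {r : ℝ | ∃ Δ : Matrix (Fin n) (Fin n) ℂ,
        (∃ z : ℂ, 0 ≤ z.re ∧ (A + Δ - z • 1).det = 0) ∧ r = specNorm Δ}
      = sInf {r : ℝ | ∃ z : ℂ, 0 ≤ z.re ∧ r = sigmaMin (A - z • 1)} := by
  set L := {r : ℝ | ∃ Δ : Matrix (Fin n) (Fin n) ℂ,
    (∃ z : ℂ, 0 ≤ z.re ∧ (A + Δ - z • 1).det = 0) ∧ r = specNorm Δ}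
  set R := {r : ℝ | ∃ z : ℂ, 0 ≤ z.re ∧ r = sigmaMin (A - z • 1)}
  rcases isEmpty_or_nonempty (Fin n) with hn | hn
  -- for `n = 0` no matrix is singular, so both sides are `0` by the conventions for `sInf`
  · have hL : L = ∅ := by simp [L, det_isEmpty]
    have hR : R = {0} := by
      simp only [R, sigmaMin_of_isEmpty]
      exact Set.eq_singleton_iff_unique_mem.mpr ⟨⟨0, le_rfl, rfl⟩, fun _ ⟨_, _, h⟩ => h⟩
    rw [hL, hR, Real.sInf_empty, csInf_singleton]
  have hL_bdd : BddBelow L := ⟨0, by rintro _ ⟨Δ, -, rfl⟩; exact specNorm_nonneg Δ⟩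
  have hR_bdd : BddBelow R := ⟨0, by rintro _ ⟨z, -, rfl⟩; exact sigmaMin_nonneg _⟩
  apply le_antisymm
  · refine le_csInf ⟨_, 0, le_rfl, rfl⟩ ?_
    rintro _ ⟨z, hz, rfl⟩
    obtain ⟨Δ, hdet, hΔ⟩ := exists_det_add_eq_zero_specNorm_le (A - z • 1)
    exact (csInf_le hL_bdd ⟨Δ, ⟨z, hz, by rwa [add_sub_right_comm]⟩, rfl⟩).trans hΔ
  · refine le_csInf ⟨_, -A, ⟨0, le_rfl, by simp⟩, rfl⟩ ?_
    rintro _ ⟨Δ, ⟨z, hz, hdet⟩, rfl⟩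
    rw [add_sub_right_comm] at hdet
    exact (csInf_le hR_bdd ⟨z, hz, rfl⟩).trans (sigmaMin_le_specNorm_of_det_add_eq_zero hdet)
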